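/- If the sobrification X^s of a T0 space X is first-countable, then X is an ω-Rudin space: every irreducible closed subset A of X is a minimal closed set meeting all members of some countable filtered family of nonempty compact saturated subsets of X. -/

import Mathlib

/-- A set is saturated if it is the intersection of all open sets containing it. -/
def IsSaturatedSet {X : Type*} [TopologicalSpace X] (A : Set X) : Prop :=
  A = ⋂₀ {U : Set X | IsOpen U ∧ A ⊆ U}

/-- The points of the sobrification: irreducible closed subsets of `X`. -/
def IrrC (X : Type*) [TopologicalSpace X] := {A : Set X // IsIrreducible A ∧ IsClosed A}

/-- The topology of the sobrification `X^s`. -/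
def sobTop (X : Type*) [TopologicalSpace X] : TopologicalSpace (IrrC X) :=
  TopologicalSpace.generateFrom
    {s : Set (IrrC X) | ∃ U : Set X, IsOpen U ∧ s = {F : IrrC X | (F.1 ∩ U).Nonempty}}

/-!
In `X^s` the sets `◇U = {F | F ∩ U ≠ ∅}` already form a basis, because irreducibility gives
`◇U ∩ ◇V = ◇(U ∩ V)`; hence an irreducible closed `A` lies in the closure of the points
`cl {a}`, `a ∈ A`. First countability turns this into a sequence `x n ∈ A` with `cl {x n} → A`,
which means that `x` converges to every point of `A`. The saturations `K n` of the tails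
`{x k | k ≥ n}` are compact, since each tail converges to its own first term `x n ∈ A`.
A closed `B ⊆ A` meeting every `K n` contains `x k` for infinitely many `k`, whereas for
`a ∈ A \ B` the sequence eventually stays in the open neighbourhood `Bᶜ` of `a`; so `B = A`.
-/

open Set Filter Topology TopologicalSpace

section Saturation

variable {X : Type*} [TopologicalSpace X]

def saturation (s : Set X) : Set X := ⋂₀ {U : Set X | IsOpen U ∧ s ⊆ U}

theorem subset_saturation (s : Set X) : s ⊆ saturation s :=
  fun _ hx _ hU => hU.2 hx

theorem saturation_subset {s U : Set X} (hU : IsOpen U) (hsU : s ⊆ U) : saturation s ⊆ U :=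
  sInter_subset_of_mem ⟨hU, hsU⟩

theorem saturation_mono {s t : Set X} (hst : s ⊆ t) : saturation s ⊆ saturation t :=
  fun _ hx U hU => hx U ⟨hU.1, hst.trans hU.2⟩

theorem isSaturatedSet_saturation (s : Set X) : IsSaturatedSet (saturation s) :=
  (subset_sInter fun _ hU => hU.2).antisymm
    (sInter_subset_sInter fun _ hU => ⟨hU.1, saturation_subset hU.1 hU.2⟩)

theorem IsCompact.saturation {s : Set X} (hs : IsCompact s) : IsCompact (saturation s) := by
  refine isCompact_of_finite_subcover fun U hUo hcov => ?_
  obtain ⟨t, ht⟩ := hs.elim_finite_subcover U hUo ((subset_saturation s).trans hcov)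
  exact ⟨t, saturation_subset (isOpen_biUnion fun i _ => hUo i) ht⟩

theorem IsClosed.inter_nonempty_of_inter_saturation_nonempty {s B : Set X} (hB : IsClosed B)
    (h : (B ∩ saturation s).Nonempty) : (B ∩ s).Nonempty := by
  by_contra hempty
  obtain ⟨y, hyB, hy⟩ := h
  exact saturation_subset hB.isOpen_compl
    (fun x hxs hxB => hempty ⟨x, hxB, hxs⟩) hy hyB

end Saturation

theorem self_mem_range_tail {α : Type*} (x : ℕ → α) (n : ℕ) : x n ∈ range fun k => x (k + n) :=
  ⟨0, congrArg x (zero_add n)⟩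

theorem antitone_range_tail {α : Type*} (x : ℕ → α) :
    Antitone fun n => range fun k => x (k + n) := by
  rintro m n hmn _ ⟨k, rfl⟩
  exact ⟨k + (n - m), by simp only [add_assoc, Nat.sub_add_cancel hmn]⟩

section OmegaRudin

variable {X : Type*} [TopologicalSpace X]

def IsOmegaRudinSet (A : Set X) : Prop :=
  ∃ K : ℕ → Set X,
    (∀ n, (K n).Nonempty ∧ IsCompact (K n) ∧ IsSaturatedSet (K n)) ∧
    (∀ m n, ∃ k, K k ⊆ K m ∧ K k ⊆ K n) ∧
    (∀ n, (A ∩ K n).Nonempty) ∧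
    (∀ B : Set X, B ⊆ A → IsClosed B → (∀ n, (B ∩ K n).Nonempty) → B = A)

theorem isCompact_range_tail {x : ℕ → X} (n : ℕ) (hx : Tendsto x atTop (𝓝 (x n))) :
    IsCompact (range fun k => x (k + n)) := by
  have h := ((tendsto_add_atTop_iff_nat n).2 hx).isCompact_insert_range
  rwa [insert_eq_of_mem (self_mem_range_tail x n)] at h

theorem eq_of_forall_inter_range_tail_nonempty {A B : Set X} {x : ℕ → X}
    (hx : ∀ a ∈ A, Tendsto x atTop (𝓝 a)) (hBA : B ⊆ A) (hB : IsClosed B)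
    (hBx : ∀ n, (B ∩ range fun k => x (k + n)).Nonempty) : B = A := by
  have hfreq : ∃ᶠ n in atTop, x n ∈ B := frequently_atTop.2 fun n => by
    obtain ⟨_, hyB, k, rfl⟩ := hBx n
    exact ⟨k + n, Nat.le_add_left n k, hyB⟩
  refine hBA.antisymm fun a haA => by_contra fun haB => ?_
  have hev : ∀ᶠ n in atTop, x n ∉ B := (hx a haA).eventually (hB.isOpen_compl.mem_nhds haB)
  obtain ⟨n, hnB, hnB'⟩ := (hfreq.and_eventually hev).exists
  exact hnB' hnB

theorem isOmegaRudinSet_of_forall_tendsto {A : Set X} {x : ℕ → X} (hxA : ∀ n, x n ∈ A)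
    (hx : ∀ a ∈ A, Tendsto x atTop (𝓝 a)) : IsOmegaRudinSet A := by
  let tail n := range fun k => x (k + n)
  refine ⟨fun n => saturation (tail n), fun n => ⟨?_, ?_, ?_⟩, fun m n => ?_, fun n => ?_,
    fun B hBA hB hBK => ?_⟩
  · exact ⟨x n, subset_saturation _ (self_mem_range_tail x n)⟩
  · exact (isCompact_range_tail n (hx _ (hxA n))).saturation
  · exact isSaturatedSet_saturation _
  · exact ⟨max m n, saturation_mono (antitone_range_tail x (le_max_left m n)),
      saturation_mono (antitone_range_tail x (le_max_right m n))⟩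
  · exact ⟨x n, hxA n, subset_saturation _ (self_mem_range_tail x n)⟩
  · exact eq_of_forall_inter_range_tail_nonempty hx hBA hB
      fun n => hB.inter_nonempty_of_inter_saturation_nonempty (hBK n)

end OmegaRudin

namespace IrrC

variable {X : Type*} [TopologicalSpace X]

instance : TopologicalSpace (IrrC X) := sobTop X

def diamond (U : Set X) : Set (IrrC X) := {F | (F.1 ∩ U).Nonempty}

def pure (x : X) : IrrC X := ⟨closure {x}, isIrreducible_singleton.closure, isClosed_closure⟩

theorem pure_mem_diamond_iff {U : Set X} (hU : IsOpen U) {x : X} : pure x ∈ diamond U ↔ x ∈ U :=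
  (closure_inter_open_nonempty_iff hU).trans singleton_inter_nonempty

theorem diamond_univ : diamond (univ : Set X) = univ :=
  eq_univ_of_forall fun F => F.2.1.1.mono (inter_univ F.1).ge

theorem diamond_inter {U V : Set X} (hU : IsOpen U) (hV : IsOpen V) :
    diamond (U ∩ V) = diamond U ∩ diamond V :=
  ext fun F => ⟨fun h => ⟨h.mono (inter_subset_inter_right _ inter_subset_left),
    h.mono (inter_subset_inter_right _ inter_subset_right)⟩,
    fun h => F.2.1.2 U V hU hV h.1 h.2⟩

theorem isOpen_diamond {U : Set X} (hU : IsOpen U) : IsOpen (diamond U) :=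
  isOpen_generateFrom_of_mem ⟨U, hU, rfl⟩

theorem isTopologicalBasis_diamond :
    IsTopologicalBasis {s : Set (IrrC X) | ∃ U, IsOpen U ∧ s = diamond U} := by
  refine isTopologicalBasis_of_subbasis_of_finiteInter rfl
    ⟨⟨univ, isOpen_univ, diamond_univ.symm⟩, ?_⟩
  rintro _ ⟨U, hU, rfl⟩ _ ⟨V, hV, rfl⟩
  exact ⟨U ∩ V, hU.inter hV, (diamond_inter hU hV).symm⟩

theorem mem_closure_image_pure (F : IrrC X) : F ∈ closure (pure '' F.1) := by
  rw [isTopologicalBasis_diamond.mem_closure_iff]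
  rintro _ ⟨U, hU, rfl⟩ ⟨a, haF, haU⟩
  exact ⟨pure a, (pure_mem_diamond_iff hU).2 haU, a, haF, rfl⟩

theorem tendsto_nhds_of_tendsto_pure {ι : Type*} {l : Filter ι} {x : ι → X} {F : IrrC X}
    (hx : Tendsto (pure ∘ x) l (𝓝 F)) {a : X} (ha : a ∈ F.1) : Tendsto x l (𝓝 a) := by
  refine (nhds_basis_opens a).tendsto_right_iff.2 fun U ⟨haU, hU⟩ => ?_
  filter_upwards [hx.eventually ((isOpen_diamond hU).mem_nhds ⟨a, ha, haU⟩)] with i hi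
  exact (pure_mem_diamond_iff hU).1 hi

theorem exists_seq_forall_tendsto [FirstCountableTopology (IrrC X)] (F : IrrC X) :
    ∃ x : ℕ → X, (∀ n, x n ∈ F.1) ∧ ∀ a ∈ F.1, Tendsto x atTop (𝓝 a) := by
  obtain ⟨y, hy, hyF⟩ := mem_closure_iff_seq_limit.1 (mem_closure_image_pure F)
  choose x hxF hxy using hy
  obtain rfl : pure ∘ x = y := funext hxy
  exact ⟨x, hxF, fun a ha => tendsto_nhds_of_tendsto_pure hyF ha⟩

end IrrC

theorem stmt16_general {X : Type*} [TopologicalSpace X]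
    (h : @FirstCountableTopology (IrrC X) (sobTop X)) :
    ∀ A : Set X, IsIrreducible A → IsClosed A →
      ∃ K : ℕ → Set X,
        (∀ n, (K n).Nonempty ∧ IsCompact (K n) ∧ IsSaturatedSet (K n)) ∧
        (∀ m n, ∃ k, K k ⊆ K m ∧ K k ⊆ K n) ∧
        (∀ n, (A ∩ K n).Nonempty) ∧
        (∀ B : Set X, B ⊆ A → IsClosed B → (∀ n, (B ∩ K n).Nonempty) → B = A) := by
  intro A hA hAc
  have : FirstCountableTopology (IrrC X) := h
  obtain ⟨x, hxA, hx⟩ := IrrC.exists_seq_forall_tendsto (⟨A, hA, hAc⟩ : IrrC X)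
  exact isOmegaRudinSet_of_forall_tendsto hxA hx

/-- If the sobrification of a T0 space `X` is first-countable, then `X` is an ω-Rudin
space: every irreducible closed `A` is a minimal closed set meeting all members of some
countable filtered family of nonempty compact saturated subsets of `X`. -/
theorem stmt16 {X : Type*} [TopologicalSpace X] [T0Space X]
    (h : @FirstCountableTopology (IrrC X) (sobTop X)) :
    ∀ A : Set X, IsIrreducible A → IsClosed A →
      ∃ K : ℕ → Set X,
        (∀ n, (K n).Nonempty ∧ IsCompact (K n) ∧ IsSaturatedSet (K n)) ∧
        (∀ m n, ∃ k, K k ⊆ K m ∧ K k ⊆ K n) ∧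
        (∀ n, (A ∩ K n).Nonempty) ∧
        (∀ B : Set X, B ⊆ A → IsClosed B → (∀ n, (B ∩ K n).Nonempty) → B = A) :=
  stmt16_general h
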